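/- arXiv:2207.13844 — 2 statements merged into one kernel-verified Lean document; each statement's English description precedes it below -/
import Mathlib

section
/- Let γ : [0,1] → 𝕊² be C² with |γ'| = 1 and κ(θ) = ⟨γ''(θ),(γ×γ')(θ)⟩ bounded between positive constants. Let K ≥ 1, δ > 0 small, and let θ, θ+Δ ∈ [0,1] with CKδ ≤ Δ for a sufficiently large constant C (depending on γ and K) and Δ ≤ C⁻¹. Then for any a with K⁻¹ ≤ |a| ≤ 1 and any b with |b| ≤ 1, one has |⟨γ(θ+Δ), a γ'(θ) + b (γ×γ')(θ)⟩| ≥ 10δ. -/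
noncomputable section
open Set MeasureTheory
open scoped ENNReal

abbrev E3 := EuclideanSpace ℝ (Fin 3)

/-- Cross product on `ℝ³`. -/
def cross3 (a b : E3) : E3 :=
  (EuclideanSpace.equiv (Fin 3) ℝ).symm
    ![a 1 * b 2 - a 2 * b 1, a 2 * b 0 - a 0 * b 2, a 0 * b 1 - a 1 * b 0]

/-- Determinant of the 3×3 matrix with columns `a, b, c`. -/
def det3 (a b c : E3) : ℝ :=
  Matrix.det !![a 0, b 0, c 0; a 1, b 1, c 1; a 2, b 2, c 2]


/-
Put `T = γ'(θ)`, `N = γ(θ) × γ'(θ)`, `w = a T + b N` and `F(t) = ⟪γ(θ + t), w⟫`. Since `γ`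
stays on the sphere, `γ ⊥ T`; a cross product is orthogonal to both factors, so `γ ⊥ N` and
`T ⊥ N`. Hence `F(0) = 0` and `F'(0) = a`, and a second-order Taylor bound gives
`|F(Δ) - a Δ| ≤ 2 M Δ²`, where `M` bounds `|γ''|` on `[0,1]`. With `C = 4 K M + 20`, the
condition `Δ ≤ C⁻¹` makes `2 K M Δ² ≤ Δ / 2`, so `K |F(Δ)| ≥ K |a| Δ - Δ / 2 ≥ Δ / 2 ≥ 10 K δ`.
-/

open scoped InnerProductSpace Matrix

lemma ofLp_cross3 (a b : E3) :
    WithLp.ofLp (cross3 a b) = WithLp.ofLp a ⨯₃ WithLp.ofLp b := by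
  ext i; fin_cases i <;> simp [cross3, cross_apply]

lemma real_inner_eq_dotProduct (x y : E3) :
    ⟪x, y⟫_ℝ = WithLp.ofLp x ⬝ᵥ WithLp.ofLp y := by
  rw [EuclideanSpace.inner_eq_star_dotProduct, star_trivial, dotProduct_comm]

lemma inner_self_cross3 (a b : E3) : ⟪a, cross3 a b⟫_ℝ = 0 := by
  rw [real_inner_eq_dotProduct, ofLp_cross3, dot_self_cross]

lemma inner_cross3_self (a b : E3) : ⟪b, cross3 a b⟫_ℝ = 0 := by
  rw [real_inner_eq_dotProduct, ofLp_cross3, dot_cross_self]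

lemma norm_cross3_sq (a b : E3) :
    ‖cross3 a b‖ ^ 2 = ‖a‖ ^ 2 * ‖b‖ ^ 2 - ⟪a, b⟫_ℝ ^ 2 := by
  simp only [← real_inner_self_eq_norm_sq, real_inner_eq_dotProduct, ofLp_cross3,
    cross_dot_cross, dotProduct_comm (WithLp.ofLp b) (WithLp.ofLp a)]
  ring

lemma norm_cross3_le (a b : E3) : ‖cross3 a b‖ ≤ ‖a‖ * ‖b‖ := by
  refine le_of_pow_le_pow_left₀ two_ne_zero (by positivity) ?_
  rw [mul_pow, norm_cross3_sq]
  linarith [sq_nonneg ⟪a, b⟫_ℝ]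

theorem inner_deriv_eq_zero_of_norm_eqOn {F : Type*} [NormedAddCommGroup F]
    [InnerProductSpace ℝ F] {γ : ℝ → F} {s : Set ℝ} {t r : ℝ}
    (hs : UniqueDiffWithinAt ℝ s t) (ht : t ∈ s) (hγ : DifferentiableAt ℝ γ t)
    (hr : ∀ u ∈ s, ‖γ u‖ = r) :
    ⟪γ t, deriv γ t⟫_ℝ = 0 := by
  have hsq : HasDerivWithinAt (‖γ ·‖ ^ 2) (2 * ⟪γ t, deriv γ t⟫_ℝ) s t :=
    hγ.hasDerivAt.norm_sq.hasDerivWithinAt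
  have hconst : HasDerivWithinAt (‖γ ·‖ ^ 2) 0 s t :=
    (hasDerivWithinAt_const t s (r ^ 2)).congr (fun u hu ↦ by rw [hr u hu])
      (by rw [hr t ht])
  linarith [hs.eq_deriv s hsq hconst]

theorem norm_sub_sub_smul_le_of_norm_deriv2_le {E : Type*} [NormedAddCommGroup E]
    [NormedSpace ℝ E] {f f' f'' : ℝ → E} {x h M : ℝ} (hh : 0 ≤ h)
    (hf : ∀ t ∈ Icc x (x + h), HasDerivAt f (f' t) t)
    (hf' : ∀ t ∈ Icc x (x + h), HasDerivAt f' (f'' t) t)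
    (hM : ∀ t ∈ Icc x (x + h), ‖f'' t‖ ≤ M) :
    ‖f (x + h) - f x - h • f' x‖ ≤ M * h ^ 2 := by
  have hx : x ∈ Icc x (x + h) := left_mem_Icc.mpr (by linarith)
  have hxh : x + h ∈ Icc x (x + h) := right_mem_Icc.mpr (by linarith)
  have hM0 : 0 ≤ M := (norm_nonneg _).trans (hM x hx)
  have hf'_sub : ∀ t ∈ Icc x (x + h), ‖f' t - f' x‖ ≤ M * h := fun t ht ↦ calc
    ‖f' t - f' x‖ ≤ M * ‖t - x‖ :=
        (convex_Icc _ _).norm_image_sub_le_of_norm_hasDerivWithin_le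
          (fun u hu ↦ (hf' u hu).hasDerivWithinAt) hM hx ht
    _ ≤ M * h := by
        rw [Real.norm_of_nonneg (by linarith [ht.1])]
        exact mul_le_mul_of_nonneg_left (by linarith [ht.2]) hM0
  calc ‖f (x + h) - f x - h • f' x‖
        = ‖(f (x + h) - (x + h) • f' x) - (f x - x • f' x)‖ := by
        rw [add_smul]; congr 1; abel
    _ ≤ M * h * ‖x + h - x‖ :=
        (convex_Icc _ _).norm_image_sub_le_of_norm_hasDerivWithin_le (f := fun t ↦ f t - t • f' x)
        (fun u hu ↦ ((hf u hu).sub ((hasDerivAt_id u).smul_const (f' x))).hasDerivWithinAt)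
        (by simpa using hf'_sub) hx hxh
    _ = M * h ^ 2 := by rw [add_sub_cancel_left, Real.norm_of_nonneg hh]; ring

theorem abs_inner_sub_mul_le_of_sphere_curve (γ : ℝ → E3) (hγ : ContDiff ℝ 2 γ)
    (hsphere : ∀ θ ∈ Icc (0:ℝ) 1, ‖γ θ‖ = 1) {M θ Δ a b : ℝ}
    (hM : ∀ s ∈ Icc (0:ℝ) 1, ‖deriv (deriv γ) s‖ ≤ M) (hθ : θ ∈ Icc (0:ℝ) 1)
    (hunit : ‖deriv γ θ‖ = 1) (hθΔ : θ + Δ ∈ Icc (0:ℝ) 1) (hΔ : 0 ≤ Δ)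
    (ha : |a| ≤ 1) (hb : |b| ≤ 1) :
    |⟪γ (θ + Δ), a • deriv γ θ + b • cross3 (γ θ) (deriv γ θ)⟫_ℝ - a * Δ| ≤
      2 * M * Δ ^ 2 := by
  set w := a • deriv γ θ + b • cross3 (γ θ) (deriv γ θ)
  have hsub : Icc θ (θ + Δ) ⊆ Icc 0 1 := Icc_subset_Icc hθ.1 hθΔ.2
  have hw : ‖w‖ ≤ 2 := calc
    ‖w‖ ≤ |a| * ‖deriv γ θ‖ + |b| * ‖cross3 (γ θ) (deriv γ θ)‖ := by
        simpa only [norm_smul, Real.norm_eq_abs] using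
          norm_add_le (a • deriv γ θ) (b • cross3 (γ θ) (deriv γ θ))
    _ ≤ 1 * 1 + 1 * (1 * 1) := by
        gcongr
        · exact hunit.le
        · exact (norm_cross3_le _ _).trans (by rw [hsphere θ hθ, hunit])
    _ = 2 := by norm_num
  have hγw : ⟪γ θ, w⟫_ℝ = 0 := by
    rw [inner_add_right, real_inner_smul_right, real_inner_smul_right, inner_self_cross3,
      inner_deriv_eq_zero_of_norm_eqOn (uniqueDiffOn_Icc zero_lt_one θ hθ) hθ
        (hγ.differentiable two_ne_zero θ) hsphere]
    ring
  have hTw : ⟪deriv γ θ, w⟫_ℝ = a := by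
    rw [inner_add_right, real_inner_smul_right, real_inner_smul_right, inner_cross3_self,
      real_inner_self_eq_norm_sq, hunit]
    ring
  have htaylor : ‖γ (θ + Δ) - γ θ - Δ • deriv γ θ‖ ≤ M * Δ ^ 2 :=
    norm_sub_sub_smul_le_of_norm_deriv2_le hΔ
      (fun t _ ↦ (hγ.differentiable two_ne_zero t).hasDerivAt)
      (fun t _ ↦ (hγ.differentiable_deriv_two t).hasDerivAt) (fun t ht ↦ hM t (hsub ht))
  calc |⟪γ (θ + Δ), w⟫_ℝ - a * Δ|
        = |⟪γ (θ + Δ) - γ θ - Δ • deriv γ θ, w⟫_ℝ| := by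
        rw [inner_sub_left, inner_sub_left, real_inner_smul_left, hγw, hTw]; ring_nf
    _ ≤ ‖γ (θ + Δ) - γ θ - Δ • deriv γ θ‖ * ‖w‖ := abs_real_inner_le_norm _ _
    _ ≤ M * Δ ^ 2 * 2 :=
        mul_le_mul htaylor hw (norm_nonneg _) ((norm_nonneg _).trans htaylor)
    _ = 2 * M * Δ ^ 2 := by ring

theorem high_part_transversality_general
    (γ : ℝ → E3) (hγ : ContDiff ℝ 2 γ)
    (hsphere : ∀ θ ∈ Icc (0:ℝ) 1, ‖γ θ‖ = 1)
    (hunit : ∀ θ ∈ Icc (0:ℝ) 1, ‖deriv γ θ‖ = 1)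
    (K : ℝ) (hK : 1 ≤ K) :
    ∃ C : ℝ, 0 < C ∧ ∀ δ : ℝ, 0 < δ → ∀ θ Δ : ℝ,
      θ ∈ Icc (0:ℝ) 1 → θ + Δ ∈ Icc (0:ℝ) 1 →
      C * K * δ ≤ Δ → Δ ≤ C⁻¹ →
      ∀ a b : ℝ, K⁻¹ ≤ |a| → |a| ≤ 1 → |b| ≤ 1 →
        10 * δ ≤ |(inner ℝ (γ (θ + Δ)) (a • deriv γ θ + b • cross3 (γ θ) (deriv γ θ)) : ℝ)| := by
  obtain ⟨M, hM⟩ := isCompact_Icc.exists_bound_of_continuousOn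
    ((hγ.deriv' (n := 1)).continuous_deriv le_rfl).continuousOn
  have hM0 : 0 ≤ M := (norm_nonneg _).trans (hM 0 (left_mem_Icc.mpr zero_le_one))
  have hK0 : 0 < K := by linarith
  set C := 4 * K * M + 20
  have hC : 0 < C := by positivity
  refine ⟨C, hC, ?_⟩
  intro δ hδ θ Δ hθ hθΔ hlo hhi a b hKa ha hb
  set F := ⟪γ (θ + Δ), a • deriv γ θ + b • cross3 (γ θ) (deriv γ θ)⟫_ℝ
  have hΔ : 0 < Δ := lt_of_lt_of_le (by positivity) hlo
  have hF : |a| * Δ - 2 * M * Δ ^ 2 ≤ |F| := by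
    have htaylor := abs_inner_sub_mul_le_of_sphere_curve γ hγ hsphere hM hθ (hunit θ hθ) hθΔ
      hΔ.le ha hb
    have hrev := abs_sub_abs_le_abs_sub (a * Δ) F
    rw [abs_sub_comm, abs_mul, abs_of_pos hΔ] at hrev
    linarith
  have hΔC : Δ * C ≤ 1 := calc
    Δ * C ≤ C⁻¹ * C := by gcongr
    _ = 1 := inv_mul_cancel₀ hC.ne'
  have hKa' : 1 ≤ K * |a| := by simpa [hK0.ne'] using mul_le_mul_of_nonneg_left hKa hK0.le
  have hquad : K * (2 * M * Δ ^ 2) ≤ Δ / 2 := by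
    nlinarith [mul_le_mul_of_nonneg_left hΔC hΔ.le]
  refine le_of_mul_le_mul_left ?_ hK0
  calc K * (10 * δ) ≤ Δ / 2 := by
        nlinarith [mul_nonneg (mul_nonneg hK0.le hM0) (mul_nonneg hK0.le hδ.le)]
    _ ≤ K * |a| * Δ - K * (2 * M * Δ ^ 2) := by
        nlinarith [mul_le_mul_of_nonneg_right hKa' hΔ.le]
    _ = K * (|a| * Δ - 2 * M * Δ ^ 2) := by ring
    _ ≤ K * |F| := by gcongr

theorem high_part_transversality
    (γ : ℝ → E3) (hγ : ContDiff ℝ 2 γ)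
    (hsphere : ∀ θ ∈ Icc (0:ℝ) 1, ‖γ θ‖ = 1)
    (hunit : ∀ θ ∈ Icc (0:ℝ) 1, ‖deriv γ θ‖ = 1)
    (c c' : ℝ) (hc : 0 < c)
    (hκ : ∀ θ ∈ Icc (0:ℝ) 1,
      c ≤ (inner ℝ (deriv (deriv γ) θ) (cross3 (γ θ) (deriv γ θ)) : ℝ) ∧
      (inner ℝ (deriv (deriv γ) θ) (cross3 (γ θ) (deriv γ θ)) : ℝ) ≤ c')
    (K : ℝ) (hK : 1 ≤ K) :
    ∃ C : ℝ, 0 < C ∧ ∀ δ : ℝ, 0 < δ → ∀ θ Δ : ℝ,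
      θ ∈ Icc (0:ℝ) 1 → θ + Δ ∈ Icc (0:ℝ) 1 →
      C * K * δ ≤ Δ → Δ ≤ C⁻¹ →
      ∀ a b : ℝ, K⁻¹ ≤ |a| → |a| ≤ 1 → |b| ≤ 1 →
        10 * δ ≤ |(inner ℝ (γ (θ + Δ)) (a • deriv γ θ + b • cross3 (γ θ) (deriv γ θ)) : ℝ)| :=
  high_part_transversality_general γ hγ hsphere hunit K hK
end
end

section
/- Let B ⊂ ℝⁿ be bounded with s-dimensional Hausdorff content ℋ^s_∞(B) = κ > 0, and let δ > 0. Then there exists a δ-separated subset P ⊆ B of cardinality ≳ κ δ^{-s} that is a (δ,s)-set: for every ball B_r of radius r with δ ≤ r ≤ 1, the maximal number of δ-separated points of P ∩ B_r is ≲ (r/δ)^s. -/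
noncomputable section
open Set MeasureTheory Metric
open scoped ENNReal

/-- The `s`-dimensional Hausdorff content of a set. -/
def hausdorffContent {X : Type*} [EMetricSpace X] (s : ℝ) (B : Set X) : ℝ≥0∞ :=
  ⨅ (t : ℕ → Set X) (_ : B ⊆ ⋃ i, t i), ∑' i, EMetric.diam (t i) ^ s

/-
Take `P ⊆ B` maximal among finite sets satisfying the `(δ, s)`-condition
`#(P ∩ B(x, r)) ≤ (r / δ) ^ s` for `δ ≤ r ≤ 1` (at `r = δ` this already forces `δ`-separation).
Unless `P` is already as large as required, maximality means that every point of `B` lies in a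
ball `B(y, r)`, `δ ≤ r ≤ 1`, with `(r / δ) ^ s ≤ 2 #(P ∩ B(y, r))`. By the Vitali covering lemma
`B` is covered by the fourfold enlargements of disjoint such balls, so
`ℋ^s_∞(B) ≤ ∑ (8 r)^s ≤ 2 · 8^s δ^s #P`.
-/

variable {X : Type*}

theorem Finset.exists_le_card_or_forall_insert [DecidableEq X] (p : Finset X → Prop) (h₀ : p ∅)
    (N : ℕ) :
    ∃ P, p P ∧ (N ≤ P.card ∨ ∀ x ∉ P, ¬ p (insert x P)) := by
  classical
  let q k := ∃ P : Finset X, p P ∧ P.card = k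
  obtain ⟨P, hP, hcard⟩ : q (Nat.findGreatest q N) :=
    Nat.findGreatest_spec (Nat.zero_le N) ⟨∅, h₀, rfl⟩
  refine ⟨P, hP, or_iff_not_imp_left.2 fun hN x hx hins => ?_⟩
  exact Nat.findGreatest_is_greatest (P := q) (n := N) (Nat.lt_succ_self _) (by omega)
    ⟨insert x P, hins, by rw [Finset.card_insert_of_notMem hx, hcard]⟩

theorem Set.PairwiseDisjoint.sum_ncard_inter_le {ι : Type*} {u : Finset ι} {S : ι → Set X}
    (h : (u : Set ι).PairwiseDisjoint S) (P : Finset X) :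
    ∑ i ∈ u, ((P : Set X) ∩ S i).ncard ≤ P.card := by
  classical
  have hcoe : ∀ i, (P : Set X) ∩ S i = ↑(P.filter (· ∈ S i)) := fun i => by ext; simp
  simp only [hcoe, Set.ncard_coe_finset]
  rw [← Finset.card_biUnion]
  · exact Finset.card_le_card (Finset.biUnion_subset.2 fun i _ => Finset.filter_subset _ _)
  · intro i hi j hj hij
    exact Finset.disjoint_left.2 fun a ha hb =>
      Set.disjoint_left.1 (h hi hj hij) (Finset.mem_filter.1 ha).2 (Finset.mem_filter.1 hb).2

theorem Set.PairwiseDisjoint.finite_of_forall_inter_nonempty {ι : Type*} {u : Set ι}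
    {S : ι → Set X} (h : u.PairwiseDisjoint S) {P : Set X} (hP : P.Finite)
    (hmeets : ∀ i ∈ u, (P ∩ S i).Nonempty) : u.Finite := by
  choose point hpoint using hmeets
  have : Finite P := hP
  refine Set.finite_coe_iff.1 <| Finite.of_injective
    (fun i : u => (⟨point i i.2, (hpoint i i.2).1⟩ : P)) ?_
  rintro ⟨i, hi⟩ ⟨j, hj⟩ he
  by_contra hne
  refine Set.disjoint_left.1 (h hi hj fun hij => hne (Subtype.ext hij)) (hpoint i hi).2 ?_
  rw [show point i hi = point j hj from congrArg Subtype.val he]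
  exact (hpoint j hj).2

theorem hausdorffContent_eq_ofFunction [EMetricSpace X] {s : ℝ} (hs : 0 < s) :
    hausdorffContent (X := X) s =
      OuterMeasure.ofFunction (fun t => Metric.ediam t ^ s) (by simp [hs]) :=
  rfl

section MetricSpace

variable [MetricSpace X] {s δ : ℝ}

theorem hausdorffContent_closedBall_le (hs : 0 < s) (y : X) {ρ : ℝ} (hρ : 0 ≤ ρ) :
    hausdorffContent s (closedBall y ρ) ≤ ENNReal.ofReal ((2 * ρ) ^ s) := by
  rw [hausdorffContent_eq_ofFunction hs]
  refine (OuterMeasure.ofFunction_le _).trans ?_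
  rw [← ENNReal.ofReal_rpow_of_nonneg (by positivity) hs.le]
  gcongr
  exact Metric.ediam_le_of_forall_dist_le fun a ha b hb =>
    (dist_triangle_right a b y).trans (by linarith [mem_closedBall.1 ha, mem_closedBall.1 hb])

theorem hausdorffContent_le_of_subset_biUnion_closedBall {ι : Type*} (hs : 0 < s) {B : Set X}
    {U : Finset ι} {y : ι → X} {ρ : ι → ℝ} (hρ : ∀ i ∈ U, 0 ≤ ρ i)
    (hB : B ⊆ ⋃ i ∈ U, closedBall (y i) (ρ i)) :
    hausdorffContent s B ≤ ENNReal.ofReal (∑ i ∈ U, (2 * ρ i) ^ s) := by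
  rw [ENNReal.ofReal_sum_of_nonneg fun i hi => Real.rpow_nonneg (by linarith [hρ i hi]) _]
  calc hausdorffContent s B
      ≤ hausdorffContent s (⋃ i ∈ U, closedBall (y i) (ρ i)) := by
        rw [hausdorffContent_eq_ofFunction hs]; exact measure_mono hB
    _ ≤ ∑ i ∈ U, hausdorffContent s (closedBall (y i) (ρ i)) := by
        rw [hausdorffContent_eq_ofFunction hs]; exact measure_biUnion_finset_le _ _
    _ ≤ _ := Finset.sum_le_sum fun i hi => hausdorffContent_closedBall_le hs (y i) (hρ i hi)

theorem hausdorffContent_le_of_forall_mem_closedBall (hs : 0 < s) {B : Set X} {P : Finset X}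
    {a R : ℝ} (ha : 0 ≤ a)
    (hB : ∀ x ∈ B, ∃ y r, 0 < r ∧ r ≤ R ∧ x ∈ closedBall y r ∧
      r ^ s ≤ a * ((P : Set X) ∩ closedBall y r).ncard) :
    hausdorffContent s B ≤ ENNReal.ofReal (8 ^ s * a * P.card) := by
  let t : Set (X × ℝ) :=
    {b | 0 < b.2 ∧ b.2 ≤ R ∧ b.2 ^ s ≤ a * ((P : Set X) ∩ closedBall b.1 b.2).ncard}
  obtain ⟨u, hut, hdisj, hcover⟩ :=
    Vitali.exists_disjoint_subfamily_covering_enlargement_closedBall t Prod.fst Prod.snd R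
      (fun b hb => hb.2.1) 4 (by norm_num)
  have hfin : u.Finite := hdisj.finite_of_forall_inter_nonempty P.finite_toSet fun b hb => by
    obtain ⟨hr, -, hheavy⟩ := hut hb
    refine Set.nonempty_of_ncard_ne_zero fun h => ?_
    rw [h, Nat.cast_zero, mul_zero] at hheavy
    linarith [Real.rpow_pos_of_pos hr s]
  have hU : ∀ b ∈ hfin.toFinset, b ∈ t := fun b hb => hut (hfin.mem_toFinset.1 hb)
  refine (hausdorffContent_le_of_subset_biUnion_closedBall hs (U := hfin.toFinset)
    (y := Prod.fst) (ρ := fun b => 4 * b.2) (fun b hb => by linarith [(hU b hb).1]) ?_).trans ?_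
  · intro x hx
    obtain ⟨y, r, hr, hrR, hxy, hheavy⟩ := hB x hx
    obtain ⟨b, hbu, hsub⟩ := hcover (y, r) ⟨hr, hrR, hheavy⟩
    exact Set.mem_biUnion (hfin.mem_toFinset.2 hbu) (hsub hxy)
  refine ENNReal.ofReal_le_ofReal ?_
  calc ∑ b ∈ hfin.toFinset, (2 * (4 * b.2)) ^ s
      = 8 ^ s * ∑ b ∈ hfin.toFinset, b.2 ^ s := by
        rw [Finset.mul_sum]
        refine Finset.sum_congr rfl fun b hb => ?_
        rw [← mul_assoc, Real.mul_rpow (by norm_num) (hU b hb).1.le]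
        norm_num
    _ ≤ 8 ^ s * ∑ b ∈ hfin.toFinset, a * ((P : Set X) ∩ closedBall b.1 b.2).ncard := by
        gcongr with b hb
        exact (hU b hb).2.2
    _ ≤ 8 ^ s * a * P.card := by
        rw [← Finset.mul_sum, ← mul_assoc]
        gcongr
        exact_mod_cast (hfin.coe_toFinset.symm ▸ hdisj).sum_ncard_inter_le P

def IsDeltaSSet (δ s : ℝ) (P : Set X) : Prop :=
  ∀ x r, δ ≤ r → r ≤ 1 → ((P ∩ closedBall x r).ncard : ℝ) ≤ (r / δ) ^ s

theorem IsDeltaSSet.le_dist (hδ : 0 < δ) (hδ1 : δ ≤ 1) {P : Finset X}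
    (hP : IsDeltaSSet δ s (P : Set X)) {x y : X} (hx : x ∈ P) (hy : y ∈ P) (hxy : x ≠ y) :
    δ ≤ dist x y := by
  by_contra! hlt
  have hpair : ({x, y} : Set X) ⊆ (P : Set X) ∩ closedBall x δ := by
    rintro z (rfl | rfl)
    · exact ⟨hx, mem_closedBall_self hδ.le⟩
    · exact ⟨hy, mem_closedBall'.2 hlt.le⟩
  have h2 : (2 : ℝ) ≤ ((P : Set X) ∩ closedBall x δ).ncard := by
    exact_mod_cast (Set.ncard_pair hxy).symm.trans_le
      (Set.ncard_le_ncard hpair (P.finite_toSet.inter_of_left _))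
  have h1 := hP x δ le_rfl hδ1
  rw [div_self hδ.ne', Real.one_rpow] at h1
  linarith

theorem IsDeltaSSet.exists_heavy_closedBall [DecidableEq X] (hδ : 0 < δ) (hδ1 : δ ≤ 1)
    (hs : 0 ≤ s) {P : Finset X} (hP : IsDeltaSSet δ s (P : Set X)) {x : X}
    (hx : x ∈ P ∨ ¬ IsDeltaSSet δ s ((insert x P : Finset X) : Set X)) :
    ∃ y r, 0 < r ∧ r ≤ 1 ∧ x ∈ closedBall y r ∧
      r ^ s ≤ 2 * δ ^ s * ((P : Set X) ∩ closedBall y r).ncard := by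
  rcases hx with hx | hx
  · refine ⟨x, δ, hδ, hδ1, mem_closedBall_self hδ.le, ?_⟩
    have hk : (1 : ℝ) ≤ ((P : Set X) ∩ closedBall x δ).ncard := by
      exact_mod_cast (Set.ncard_pos (P.finite_toSet.inter_of_left _)).2
        ⟨x, hx, mem_closedBall_self hδ.le⟩
    nlinarith [Real.rpow_nonneg hδ.le s]
  · simp only [IsDeltaSSet, not_forall, not_le] at hx
    obtain ⟨y, r, hδr, hr1, hlt⟩ := hx
    have hxy : x ∈ closedBall y r := by
      by_contra hxy
      rw [Finset.coe_insert, Set.insert_inter_of_notMem hxy] at hlt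
      exact (hP y r hδr hr1).not_gt hlt
    rw [Finset.coe_insert, Set.insert_inter_of_mem hxy] at hlt
    set k := ((P : Set X) ∩ closedBall y r).ncard
    have hins : ((insert x ((P : Set X) ∩ closedBall y r)).ncard : ℝ) ≤ k + 1 := by
      exact_mod_cast Set.ncard_insert_le _ _
    have hone : 1 ≤ (r / δ) ^ s := Real.one_le_rpow ((one_le_div hδ).2 hδr) hs
    have hk : (1 : ℝ) ≤ k := Nat.one_le_cast.2 ((Nat.cast_pos (α := ℝ)).1 (by linarith))
    have hrδ : (r / δ) ^ s < 2 * k := by linarith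
    rw [Real.div_rpow (by linarith) hδ.le, div_lt_iff₀ (Real.rpow_pos_of_pos hδ s)] at hrδ
    exact ⟨y, r, hδ.trans_le hδr, hr1, hxy, by linarith⟩

end MetricSpace

theorem delta_separated_delta_s_subset (n : ℕ) (s : ℝ) (hs : 0 < s) :
    ∃ c C : ℝ, 0 < c ∧ 0 < C ∧
      ∀ B : Set (EuclideanSpace ℝ (Fin n)), Bornology.IsBounded B →
      ∀ κ : ℝ, 0 < κ → hausdorffContent s B = ENNReal.ofReal κ →
      ∀ δ : ℝ, 0 < δ → δ ≤ 1 →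
        ∃ P : Finset (EuclideanSpace ℝ (Fin n)),
          (P : Set (EuclideanSpace ℝ (Fin n))) ⊆ B ∧
          (∀ x ∈ P, ∀ y ∈ P, x ≠ y → δ ≤ dist x y) ∧
          c * κ * δ ^ (-s) ≤ (P.card : ℝ) ∧
          ∀ (x : EuclideanSpace ℝ (Fin n)) (r : ℝ), δ ≤ r → r ≤ 1 →
            (((P : Set (EuclideanSpace ℝ (Fin n))) ∩ closedBall x r).ncard : ℝ) ≤
              C * (r / δ) ^ s := by
  classical
  refine ⟨(2 * 8 ^ s)⁻¹, 1, by positivity, one_pos, ?_⟩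
  intro B _ κ _ hκ δ hδ hδ1
  obtain ⟨P, ⟨hPB, hP⟩, hcard⟩ := Finset.exists_le_card_or_forall_insert
    (fun P : Finset (EuclideanSpace ℝ (Fin n)) =>
      ↑P ⊆ B ∧ IsDeltaSSet δ s (P : Set (EuclideanSpace ℝ (Fin n))))
    ⟨by simp, fun x r hr _ => by
      simpa using Real.rpow_nonneg (div_nonneg (hδ.le.trans hr) hδ.le) s⟩
    ⌈(2 * 8 ^ s)⁻¹ * κ * δ ^ (-s)⌉₊
  refine ⟨P, hPB, fun x hx y hy => hP.le_dist hδ hδ1 hx hy, ?_,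
    fun x r hr hr1 => (hP x r hr hr1).trans_eq (one_mul _).symm⟩
  rcases hcard with hN | hmax
  · exact (Nat.le_ceil _).trans (by exact_mod_cast hN)
  have hheavy := fun x (hx : x ∈ B) => hP.exists_heavy_closedBall hδ hδ1 hs.le
    ((em (x ∈ P)).imp_right fun hxP h => hmax x hxP ⟨by simpa using Set.insert_subset hx hPB, h⟩)
  have hκP : κ ≤ 8 ^ s * (2 * δ ^ s) * P.card :=
    (ENNReal.ofReal_le_ofReal_iff (by positivity)).1 <|
      hκ ▸ hausdorffContent_le_of_forall_mem_closedBall hs (by positivity) hheavy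
  rw [Real.rpow_neg hδ.le, mul_assoc, inv_mul_le_iff₀ (by positivity),
    mul_inv_le_iff₀ (by positivity)]
  linarith
end
end
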